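/- arXiv:1101.1256 — 2 statements merged into one kernel-verified Lean document; each statement's English description precedes it below -/
import Mathlib

section
/- In the instance with m(m−1) unit jobs and one job of length m on m identical machines, the profile assigning m−1 unit jobs to each machine and the big job to an arbitrary machine is a strong Nash equilibrium with makespan 2m−1, while the optimum makespan is m; hence the strong price of anarchy under EQUI on identical machines is at least 2 − 1/m. -/
/-!
Since every job has length at least `1` and all but one have length exactly `1`, the EQUI cost
of a unit job is the number of jobs on its machine, and that of the big job is this number plus
`m - 1`. A move therefore helps a job exactly when its new machine holds fewer jobs than its old
one, and in the given profile every machine holds `m - 1` or `m` jobs. Counting then excludes an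
improving coalition: a machine a member moves to ends up with at most `m - 1` jobs, a machine no
member moves to keeps a subset of its jobs, so no machine gains jobs; as the total is fixed, no
machine loses any, and the machine a member leaves must have held `m` jobs and now holds fewer.
The optimum `m` is forced by the total length `m²` and attained by putting the big job alone.
-/

/-- Load of machine `j` (identical machines, job lengths `p`). -/
def idLoad {n m : ℕ} (p : Fin n → ℝ) (σ : Fin n → Fin m) (j : Fin m) : ℝ :=
  ∑ i ∈ Finset.univ.filter (fun i => σ i = j), p i

/-- EQUI cost of job `i` on identical machines. -/
def idEquiCost {n m : ℕ} (p : Fin n → ℝ) (σ : Fin n → Fin m) (i : Fin n) : ℝ :=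
  ∑ i' ∈ Finset.univ.filter (fun i' => σ i' = σ i), min (p i) (p i')

/-- Strong Nash equilibrium under EQUI on identical machines: no nonempty coalition
can move so that every member strictly decreases its cost. -/
def idEquiStrongNE {n m : ℕ} (p : Fin n → ℝ) (σ : Fin n → Fin m) : Prop :=
  ¬ ∃ (S : Finset (Fin n)) (σ' : Fin n → Fin m), S.Nonempty ∧
      (∀ i ∉ S, σ' i = σ i) ∧ ∀ i ∈ S, idEquiCost p σ' i < idEquiCost p σ i

open Finset

section Counting

variable {ι κ : Type*} [Fintype ι] [DecidableEq κ]

def numJobs (τ : ι → κ) (j : κ) : ℕ := #{i | τ i = j}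

lemma sum_numJobs [Fintype κ] (τ : ι → κ) : ∑ j, numJobs τ j = Fintype.card ι :=
  (card_eq_sum_card_fiberwise fun i _ => mem_univ (τ i)).symm

lemma numJobs_fin_succ {N : ℕ} (τ : Fin (N + 1) → κ) (j : κ) :
    numJobs τ j =
      numJobs (fun i : Fin N => τ i.castSucc) j + if τ (Fin.last N) = j then 1 else 0 := by
  simp only [numJobs, card_filter, Fin.sum_univ_castSucc]

lemma eq_empty_of_balanced {σ σ' : ι → κ} [Fintype κ] {S : Finset ι} {q : ℕ}
    (hσ : ∀ j, q ≤ numJobs σ j ∧ numJobs σ j ≤ q + 1) (hfix : ∀ i ∉ S, σ' i = σ i)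
    (himp : ∀ i ∈ S, numJobs σ' (σ' i) < numJobs σ (σ i)) : S = ∅ := by
  by_contra hS
  obtain ⟨i, hi⟩ := nonempty_iff_ne_empty.2 hS
  have hstay : ∀ j, (∀ k ∈ S, σ' k ≠ j) →
      ({k | σ' k = j} : Finset ι) ⊆ ({k | σ k = j} : Finset ι) := by
    intro j hj k hk
    simp only [mem_filter, mem_univ, true_and] at hk ⊢
    by_cases hkS : k ∈ S
    · exact absurd hk (hj k hkS)
    · rw [← hfix k hkS, hk]
  have hle : ∀ j ∈ univ, numJobs σ' j ≤ numJobs σ j := by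
    intro j _
    by_cases h : ∃ k ∈ S, σ' k = j
    · obtain ⟨k, hk, rfl⟩ := h
      have := himp k hk
      have := (hσ (σ k)).2
      have := (hσ (σ' k)).1
      omega
    · push Not at h
      exact card_le_card (hstay j h)
  have heq : ∀ j, numJobs σ' j = numJobs σ j := fun j =>
    (sum_eq_sum_iff_of_le hle).1 (by rw [sum_numJobs, sum_numJobs]) j (mem_univ j)
  have hfull : numJobs σ (σ i) = q + 1 := by
    have := himp i hi
    have := heq (σ' i)
    have := (hσ (σ i)).2
    have := (hσ (σ' i)).1
    omega
  have hfree : ∀ k ∈ S, σ' k ≠ σ i := by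
    intro k hk hki
    have hlt := himp k hk
    rw [hki, heq, hfull] at hlt
    exact absurd hlt (not_lt.2 (hσ (σ k)).2)
  have hlt : numJobs σ' (σ i) < numJobs σ (σ i) := by
    refine card_lt_card ⟨hstay _ hfree, fun h => hfree i hi ?_⟩
    simpa using h (by simp : i ∈ ({k | σ k = σ i} : Finset ι))
  exact (heq (σ i)).not_lt hlt

end Counting

section OneBigJob

variable {n m : ℕ} {p : Fin n → ℝ} {b : Fin n}

lemma one_le_of_forall_ne (hp : ∀ i ≠ b, p i = 1) (hb : 1 ≤ p b) (i : Fin n) :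
    1 ≤ p i := by
  by_cases hi : i = b
  · rwa [hi]
  · rw [hp i hi]

lemma eq_one_add_ite_of_forall_ne (hp : ∀ i ≠ b, p i = 1) (i : Fin n) :
    p i = 1 + if i = b then p b - 1 else 0 := by
  split_ifs with h
  · rw [h]; ring
  · rw [hp i h, add_zero]

lemma idLoad_eq_numJobs_add (hp : ∀ i ≠ b, p i = 1) (τ : Fin n → Fin m) (j : Fin m) :
    idLoad p τ j = numJobs τ j + if τ b = j then p b - 1 else 0 := by
  rw [idLoad, sum_congr rfl fun i _ => eq_one_add_ite_of_forall_ne hp i, sum_add_distrib,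
    sum_ite_eq', sum_const, nsmul_one]
  simp only [mem_filter, mem_univ, true_and, numJobs]

lemma idEquiCost_of_ne (hp : ∀ i ≠ b, p i = 1) (hb : 1 ≤ p b) (τ : Fin n → Fin m)
    {i : Fin n} (hi : i ≠ b) : idEquiCost p τ i = numJobs τ (τ i) := by
  rw [idEquiCost, sum_congr rfl fun k _ => by
    rw [hp i hi, min_eq_left (one_le_of_forall_ne hp hb k)], sum_const, nsmul_one]
  rfl

lemma idEquiCost_eq_idLoad (hp : ∀ i ≠ b, p i = 1) (hb : 1 ≤ p b) (τ : Fin n → Fin m) :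
    idEquiCost p τ b = idLoad p τ (τ b) := by
  refine sum_congr rfl fun k _ => min_eq_right ?_
  by_cases hk : k = b
  · rw [hk]
  · rwa [hp k hk]

lemma idEquiCost_lt_idEquiCost_iff (hp : ∀ i ≠ b, p i = 1) (hb : 1 ≤ p b)
    {σ σ' : Fin n → Fin m} (i : Fin n) :
    idEquiCost p σ' i < idEquiCost p σ i ↔ numJobs σ' (σ' i) < numJobs σ (σ i) := by
  by_cases hi : i = b
  · subst hi
    simp only [idEquiCost_eq_idLoad hp hb, idLoad_eq_numJobs_add hp, if_pos, add_lt_add_iff_right,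
      Nat.cast_lt]
  · simp only [idEquiCost_of_ne hp hb _ hi, Nat.cast_lt]

theorem idEquiStrongNE_of_balanced (hp : ∀ i ≠ b, p i = 1) (hb : 1 ≤ p b)
    {σ : Fin n → Fin m} {q : ℕ} (hσ : ∀ j, q ≤ numJobs σ j ∧ numJobs σ j ≤ q + 1) :
    idEquiStrongNE p σ := by
  rintro ⟨S, σ', hS, hfix, himp⟩
  refine hS.ne_empty (eq_empty_of_balanced hσ hfix fun i hi => ?_)
  exact (idEquiCost_lt_idEquiCost_iff hp hb i).1 (himp i hi)

end OneBigJob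

lemma sum_le_mul_iSup_idLoad {n m : ℕ} (p : Fin n → ℝ) (τ : Fin n → Fin m) :
    ∑ i, p i ≤ m * ⨆ j, idLoad p τ j := by
  calc ∑ i, p i = ∑ j, idLoad p τ j := (sum_fiberwise univ τ p).symm
    _ ≤ ∑ _j : Fin m, ⨆ j, idLoad p τ j :=
      sum_le_sum fun j _ => le_ciSup (Finite.bddAbove_range _) j
    _ = m * ⨆ j, idLoad p τ j := by simp

lemma numJobs_castLE_modNat_le {k c m : ℕ} (h : c ≤ m) (j : Fin m) :
    numJobs (fun u : Fin (k * c) => Fin.castLE h u.modNat) j ≤ k := by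
  calc numJobs (fun u : Fin (k * c) => Fin.castLE h u.modNat) j
      ≤ #(univ : Finset (Fin k)) := by
        refine card_le_card_of_injOn Fin.divNat (fun _ _ => mem_univ _) fun u hu v hv huv => ?_
        simp only [coe_filter, mem_univ, true_and, Set.mem_ofPred_eq] at hu hv
        apply finProdFinEquiv.symm.injective
        rw [finProdFinEquiv_symm_apply, finProdFinEquiv_symm_apply, huv,
          Fin.castLE_injective h (hu.trans hv.symm)]
    _ = k := by simp

lemma numJobs_eq_of_card_units {m : ℕ} {σ : Fin (m * (m - 1) + 1) → Fin m}
    (hσ : ∀ j, #{i | σ i = j ∧ i.val < m * (m - 1)} = m - 1) (j : Fin m) :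
    numJobs σ j = m - 1 + if σ (Fin.last _) = j then 1 else 0 := by
  have hunits : numJobs (fun i : Fin (m * (m - 1)) => σ i.castSucc) j =
      #{i | σ i = j ∧ i.val < m * (m - 1)} := by
    rw [numJobs, card_filter, card_filter, Fin.sum_univ_castSucc]
    simp
  rw [numJobs_fin_succ, hunits, hσ j]

section UnitJobsAndOneJobOfLengthM

variable {m : ℕ} {p : Fin (m * (m - 1) + 1) → ℝ}
  (hunit : ∀ i ≠ Fin.last _, p i = 1) (hbig : p (Fin.last _) = m)
include hunit hbig

lemma le_iSup_idLoad (hm : 0 < m) (τ : Fin (m * (m - 1) + 1) → Fin m) :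
    (m : ℝ) ≤ ⨆ j, idLoad p τ j := by
  have htotal : ∑ i, p i = m * m := by
    rw [Fin.sum_univ_castSucc, sum_congr rfl fun u _ => hunit _ (Fin.castSucc_ne_last u), hbig]
    simp only [sum_const, card_univ, Fintype.card_fin, nsmul_eq_mul, mul_one]
    push_cast [Nat.cast_sub hm]
    ring
  have := sum_le_mul_iSup_idLoad p τ
  rw [htotal] at this
  exact le_of_mul_le_mul_left this (Nat.cast_pos.2 hm)

lemma exists_forall_idLoad_le (hm : 0 < m) :
    ∃ τ : Fin (m * (m - 1) + 1) → Fin m, ∀ j, idLoad p τ j ≤ m := by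
  let top : Fin m := ⟨m - 1, Nat.sub_lt hm one_pos⟩
  let units : Fin (m * (m - 1)) → Fin m := fun u => Fin.castLE (Nat.sub_le m 1) u.modNat
  refine ⟨Fin.snoc units top, fun j => ?_⟩
  rw [idLoad_eq_numJobs_add hunit, numJobs_fin_succ, hbig]
  simp only [Fin.snoc_castSucc, Fin.snoc_last]
  by_cases hj : top = j
  · have hempty : numJobs units j = 0 := by
      refine card_eq_zero.2 (filter_eq_empty_iff.2 fun u _ hu => ?_)
      exact u.modNat.isLt.ne (congrArg Fin.val (hu.trans hj.symm))
    simp [hj, hempty]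
  · simp only [if_neg hj, add_zero]
    exact_mod_cast numJobs_castLE_modNat_le _ j

lemma iSup_idLoad_eq_of_numJobs_eq (hm : 0 < m) {σ : Fin (m * (m - 1) + 1) → Fin m}
    (hσ : ∀ j, numJobs σ j = m - 1 + if σ (Fin.last _) = j then 1 else 0) :
    (⨆ j, idLoad p σ j) = 2 * (m : ℝ) - 1 := by
  have : Nonempty (Fin m) := ⟨σ 0⟩
  have hload (j : Fin m) :
      idLoad p σ j = m - 1 + if σ (Fin.last _) = j then (m : ℝ) else 0 := by
    rw [idLoad_eq_numJobs_add hunit, hσ, hbig]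
    split_ifs <;> push_cast [Nat.cast_sub hm] <;> ring
  refine le_antisymm (ciSup_le fun j => ?_) ?_
  · rw [hload]
    split_ifs <;> linarith [(Nat.one_le_cast (α := ℝ)).2 hm]
  · exact le_ciSup_of_le (Finite.bddAbove_range _) (σ (Fin.last _))
      (by rw [hload, if_pos rfl]; linarith)

end UnitJobsAndOneJobOfLengthM

theorem equi_identical_spoa_lower_general
    (m : ℕ) (p : Fin (m * (m - 1) + 1) → ℝ)
    (hp : ∀ i, p i = if i.val < m * (m - 1) then 1 else (m : ℝ))
    (σ : Fin (m * (m - 1) + 1) → Fin m)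
    (hσ : ∀ j : Fin m,
      (Finset.univ.filter (fun i : Fin (m * (m - 1) + 1) =>
        σ i = j ∧ i.val < m * (m - 1))).card = m - 1) :
    idEquiStrongNE p σ ∧
    (⨆ j, idLoad p σ j) = 2 * (m : ℝ) - 1 ∧
    (∃ τ : Fin (m * (m - 1) + 1) → Fin m, (⨆ j, idLoad p τ j) = (m : ℝ)) ∧
    (∀ τ : Fin (m * (m - 1) + 1) → Fin m, (m : ℝ) ≤ ⨆ j, idLoad p τ j) := by
  have hm : 0 < m := (σ 0).pos
  have : Nonempty (Fin m) := ⟨σ 0⟩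
  have hunit : ∀ i ≠ Fin.last _, p i = 1 := fun i hi => by rw [hp, if_pos (Fin.val_lt_last hi)]
  have hbig : p (Fin.last _) = m := by rw [hp, if_neg (by simp)]
  have hcount := numJobs_eq_of_card_units hσ
  have hbalanced (j : Fin m) : m - 1 ≤ numJobs σ j ∧ numJobs σ j ≤ m - 1 + 1 := by
    rw [hcount]
    split_ifs <;> omega
  obtain ⟨τ, hτ⟩ := exists_forall_idLoad_le hunit hbig hm
  exact ⟨idEquiStrongNE_of_balanced hunit (by rw [hbig]; exact_mod_cast hm) hbalanced,
    iSup_idLoad_eq_of_numJobs_eq hunit hbig hm hcount,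
    ⟨τ, le_antisymm (ciSup_le hτ) (le_iSup_idLoad hunit hbig hm τ)⟩,
    le_iSup_idLoad hunit hbig hm⟩

/-- In the instance with `m(m−1)` unit jobs and one job of length `m` on
`m` identical machines, any profile placing `m−1` unit jobs on each machine (the big
job going anywhere) is a strong Nash equilibrium of makespan `2m − 1`, while the
optimal makespan is `m`; hence the strong price of anarchy is at least `2 − 1/m`. -/
theorem equi_identical_spoa_lower
    (m : ℕ) (hm : 2 ≤ m) (p : Fin (m * (m - 1) + 1) → ℝ)
    (hp : ∀ i, p i = if i.val < m * (m - 1) then 1 else (m : ℝ))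
    (σ : Fin (m * (m - 1) + 1) → Fin m)
    (hσ : ∀ j : Fin m,
      (Finset.univ.filter (fun i : Fin (m * (m - 1) + 1) =>
        σ i = j ∧ i.val < m * (m - 1))).card = m - 1) :
    idEquiStrongNE p σ ∧
    (⨆ j, idLoad p σ j) = 2 * (m : ℝ) - 1 ∧
    (∃ τ : Fin (m * (m - 1) + 1) → Fin m, (⨆ j, idLoad p τ j) = (m : ℝ)) ∧
    (∀ τ : Fin (m * (m - 1) + 1) → Fin m, (m : ℝ) ≤ ⨆ j, idLoad p τ j) :=
  equi_identical_spoa_lower_general m p hp σ hσ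
end

section
/- The price of anarchy of the EQUI policy on uniform machines is Ω(log m): for every k there is an instance with m = 1 + (2/3)(4^k − 1) + 2·4^{k−1} machines whose optimal makespan is at most 3 and which admits a (strong) Nash equilibrium of makespan k + 2. -/
/-! Machines of group `u` have speed `2⁻ᵘ`. In the equilibrium every job of length `2⁻ʲ` pays
exactly `k + 2 - j` and a machine of group `u` finishes at time `k + 2 - u`. It is a strong
equilibrium by counting: the total number of jobs is fixed, so some machine receiving a member
of an improving coalition does not lose jobs; but the member of highest level on it can only
improve if that machine ends up with strictly fewer jobs than before. In the optimum every job
that is not among the first two on its machine moves to a machine of its own whose speed equals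
its length; the groups are sized so that there are exactly enough of them (`m_j = Σ_{t<j}
m_t 2^{j-t}`), and then every machine carries at most three jobs of length equal to its speed. -/

/-- Load of machine `j` (job lengths `p`). -/
def uLoad {n m : ℕ} (p : Fin n → ℝ) (σ : Fin n → Fin m) (j : Fin m) : ℝ :=
  ∑ i ∈ Finset.univ.filter (fun i => σ i = j), p i

/-- EQUI cost of job `i` on uniform machines with speeds `s`:
`(1/s_{σ i}) Σ_{i' : σ i' = σ i} min(p_i, p_{i'})`. -/
noncomputable def uEquiCost {n m : ℕ} (p : Fin n → ℝ) (s : Fin m → ℝ)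
    (σ : Fin n → Fin m) (i : Fin n) : ℝ :=
  (s (σ i))⁻¹ * ∑ i' ∈ Finset.univ.filter (fun i' => σ i' = σ i), min (p i) (p i')

/-- Pure Nash equilibrium under EQUI on uniform machines. -/
def uEquiNE {n m : ℕ} (p : Fin n → ℝ) (s : Fin m → ℝ) (σ : Fin n → Fin m) : Prop :=
  ∀ (i : Fin n) (b : Fin m), uEquiCost p s σ i ≤ uEquiCost p s (Function.update σ i b) i

/-- Strong Nash equilibrium under EQUI on uniform machines. -/
def uEquiStrongNE {n m : ℕ} (p : Fin n → ℝ) (s : Fin m → ℝ) (σ : Fin n → Fin m) : Prop :=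
  ¬ ∃ (S : Finset (Fin n)) (σ' : Fin n → Fin m), S.Nonempty ∧
      (∀ i ∉ S, σ' i = σ i) ∧ ∀ i ∈ S, uEquiCost p s σ' i < uEquiCost p s σ i

open Finset

section Equi

variable {J M : Type*} [Fintype J] [DecidableEq M]

/-! `uLoad`, `uEquiCost` and `uEquiStrongNE` are these definitions at `J = Fin n`, `M = Fin m`. -/

def equiLoad (p : J → ℝ) (σ : J → M) (y : M) : ℝ :=
  ∑ i ∈ univ.filter (fun i => σ i = y), p i

noncomputable def equiCost (p : J → ℝ) (s : M → ℝ) (σ : J → M) (i : J) : ℝ :=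
  (s (σ i))⁻¹ * ∑ i' ∈ univ.filter (fun i' => σ i' = σ i), min (p i) (p i')

def IsEquiStrongNE (p : J → ℝ) (s : M → ℝ) (σ : J → M) : Prop :=
  ¬ ∃ (S : Finset J) (σ' : J → M), S.Nonempty ∧
      (∀ i ∉ S, σ' i = σ i) ∧ ∀ i ∈ S, equiCost p s σ' i < equiCost p s σ i

theorem equiLoad_eq_card_mul {p : J → ℝ} {s : M → ℝ} {σ : J → M} (h : ∀ i, p i = s (σ i))
    (y : M) : equiLoad p σ y = #{i | σ i = y} * s y := by
  rw [equiLoad, sum_congr rfl fun i hi => (h i).trans (congrArg s (mem_filter.1 hi).2),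
    sum_const, nsmul_eq_mul]

theorem div_le_equiCost {p : J → ℝ} {s : M → ℝ} {σ : J → M} (hp : ∀ i, 0 ≤ p i) {i : J}
    (hs : 0 ≤ s (σ i)) : p i / s (σ i) ≤ equiCost p s σ i := by
  rw [equiCost, div_eq_inv_mul]
  refine mul_le_mul_of_nonneg_left ?_ (inv_nonneg.2 hs)
  calc p i = min (p i) (p i) := (min_self _).symm
    _ ≤ ∑ i' ∈ univ.filter (fun i' => σ i' = σ i), min (p i) (p i') :=
      single_le_sum (f := fun i' => min (p i) (p i')) (fun i' _ => le_min (hp i) (hp i'))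
        (mem_filter.2 ⟨mem_univ i, rfl⟩)

theorem exists_mem_card_fiber_le [Fintype M] {σ σ' : J → M} {S : Finset J} (hS : S.Nonempty)
    (hfix : ∀ i ∉ S, σ' i = σ i) : ∃ i ∈ S, #{j | σ j = σ' i} ≤ #{j | σ' j = σ' i} := by
  by_contra! hlt
  have hle : ∀ y, #{j | σ' j = y} ≤ #{j | σ j = y} := by
    intro y
    by_cases hy : ∃ i ∈ S, σ' i = y
    · obtain ⟨i, hi, rfl⟩ := hy
      exact (hlt i hi).le
    · push Not at hy
      refine card_le_card fun j hj => ?_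
      simp only [mem_filter, mem_univ, true_and] at hj ⊢
      rwa [← hfix j fun hjS => hy j hjS hj]
  obtain ⟨i, hi⟩ := hS
  have hsum := sum_lt_sum (fun y _ => hle y) ⟨σ' i, mem_univ _, hlt i hi⟩
  rw [← card_eq_sum_card_fiberwise fun i _ => mem_univ (σ' i),
    ← card_eq_sum_card_fiberwise fun i _ => mem_univ (σ i)] at hsum
  exact hsum.false

variable {J' M' : Type*} [Fintype J'] [DecidableEq M']

theorem equiLoad_comp_equiv (f : J' ≃ J) (e : M' ≃ M) (p : J → ℝ) (σ : J → M) (y : M') :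
    equiLoad (p ∘ f) (e.symm ∘ σ ∘ f) y = equiLoad p σ (e y) := by
  simp only [equiLoad, sum_filter, Function.comp_apply, Equiv.symm_apply_eq]
  exact f.sum_comp fun i => if σ i = e y then p i else 0

theorem equiCost_comp_equiv (f : J' ≃ J) (e : M' ≃ M) (p : J → ℝ) (s : M → ℝ) (σ : J → M)
    (i : J') : equiCost (p ∘ f) (s ∘ e) (e.symm ∘ σ ∘ f) i = equiCost p s σ (f i) := by
  simp only [equiCost, sum_filter, Function.comp_apply, Equiv.apply_symm_apply,
    e.symm.injective.eq_iff]
  congr 1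
  exact f.sum_comp fun i' => if σ i' = σ (f i) then min (p (f i)) (p i') else 0

theorem IsEquiStrongNE.comp_equiv {p : J → ℝ} {s : M → ℝ} {σ : J → M} (h : IsEquiStrongNE p s σ)
    (f : J' ≃ J) (e : M' ≃ M) : IsEquiStrongNE (p ∘ f) (s ∘ e) (e.symm ∘ σ ∘ f) := by
  rintro ⟨S, τ, hS, hfix, himp⟩
  have hτ : e.symm ∘ (e ∘ τ ∘ f.symm) ∘ f = τ := by funext; simp
  refine h ⟨S.map f.toEmbedding, e ∘ τ ∘ f.symm, hS.map, fun i hi => ?_, fun i hi => ?_⟩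
  · rw [mem_map_equiv] at hi
    simp [hfix _ hi]
  · rw [mem_map_equiv] at hi
    obtain ⟨i, rfl⟩ := f.surjective i
    rw [f.symm_apply_apply] at hi
    have hcost := himp i hi
    rwa [← hτ, equiCost_comp_equiv, equiCost_comp_equiv] at hcost

end Equi

theorem uEquiNE_of_uEquiStrongNE {n m : ℕ} {p : Fin n → ℝ} {s : Fin m → ℝ} {σ : Fin n → Fin m}
    (h : uEquiStrongNE p s σ) : uEquiNE p s σ := by
  intro i b
  by_contra! hlt
  exact h ⟨{i}, Function.update σ i b, singleton_nonempty i,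
    fun i' hi' => Function.update_of_ne (by simpa using hi') _ _, by simpa using hlt⟩

theorem sum_filter_sigma_fst {α : Type*} {β : α → Type*} [Fintype α] [DecidableEq α]
    [∀ a, Fintype (β a)] {R : Type*} [AddCommMonoid R] (f : Sigma β → R) (a : α) :
    ∑ x ∈ univ.filter (fun x : Sigma β => x.1 = a), f x = ∑ b, f ⟨a, b⟩ := by
  rw [sum_filter, Fintype.sum_sigma, Fintype.sum_eq_single a fun a' ha' => by simp [ha']]
  simp

theorem min_inv_two_pow (a b : ℕ) :
    min ((2:ℝ) ^ a)⁻¹ ((2:ℝ) ^ b)⁻¹ = ((2:ℝ) ^ max a b)⁻¹ :=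
  (Antitone.map_max fun _ _ h => inv_anti₀ (by positivity) (pow_le_pow_right₀ one_le_two h)).symm

theorem sub_add_one_le_two_pow_mul_inv {j u : ℕ} (h : j ≤ u) :
    (u : ℝ) - j + 1 ≤ 2 ^ u * ((2:ℝ) ^ j)⁻¹ := by
  rw [← pow_sub₀ _ two_ne_zero h]
  have h' : ((u - j : ℕ) : ℝ) + 1 ≤ 2 ^ (u - j) := by exact_mod_cast Nat.lt_two_pow_self
  push_cast [h] at h'
  linarith

theorem sum_range_inv_two_pow_max_log {d K : ℕ} (h : d ≤ K) :
    ∑ t ∈ range (2 ^ K), ((2:ℝ) ^ max d (Nat.log 2 t))⁻¹ = K + 1 - d := by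
  induction K, h using Nat.le_induction with
  | base =>
    have hmax : ∀ t ∈ range (2 ^ d), max d (Nat.log 2 t) = d := fun t ht => by
      rcases Nat.eq_zero_or_pos t with rfl | ht0
      · simp
      · exact max_eq_left (Nat.log_lt_of_lt_pow ht0.ne' (mem_range.1 ht)).le
    rw [sum_congr rfl fun t ht => by rw [hmax t ht], sum_const, card_range, nsmul_eq_mul]
    push_cast
    rw [mul_inv_cancel₀ (by positivity)]
    ring
  | succ K hdK ih =>
    have hlog : ∀ t ∈ Ico (2 ^ K) (2 ^ (K + 1)), max d (Nat.log 2 t) = K := fun t ht => by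
      rw [mem_Ico] at ht
      rw [Nat.log_eq_of_pow_le_of_lt_pow ht.1 ht.2, max_eq_right hdK]
    rw [← sum_range_add_sum_Ico _ (Nat.pow_le_pow_right two_pos K.le_succ), ih,
      sum_congr rfl fun t ht => by rw [hlog t ht], sum_const, Nat.card_Ico, nsmul_eq_mul,
      pow_succ, Nat.mul_two, Nat.add_sub_cancel]
    push_cast
    rw [mul_inv_cancel₀ (by positivity)]
    ring

section LevelWeights

variable {ι : Type*} (lvl : ι → ℕ) {F F' : Finset ι}

theorem card_lt_card_of_sum_lt (j : ℕ) (hF' : ∀ i ∈ F', j < lvl i → i ∈ F)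
    (hsum : ∑ i ∈ F', ((2:ℝ) ^ max j (lvl i))⁻¹ < ∑ i ∈ F, ((2:ℝ) ^ max j (lvl i))⁻¹) :
    #F' < #F := by
  set φ : ι → ℝ := fun i => 1 - 2 ^ j * ((2:ℝ) ^ max j (lvl i))⁻¹ with hφ_def
  have hφ_nonneg : ∀ i, 0 ≤ φ i := fun i => by
    simp only [hφ_def]
    rw [sub_nonneg, mul_inv_le_iff₀ (by positivity), one_mul]
    exact pow_le_pow_right₀ one_le_two (le_max_left _ _)
  have hφ_zero : ∀ i, lvl i ≤ j → φ i = 0 := fun i hi => by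
    simp only [hφ_def]
    rw [max_eq_left hi, mul_inv_cancel₀ (by positivity), sub_self]
  have hφ : ∑ i ∈ F', φ i ≤ ∑ i ∈ F, φ i := calc
    ∑ i ∈ F', φ i = ∑ i ∈ F' with j < lvl i, φ i :=
      (sum_filter_of_ne fun i _ h => by_contra fun hlt => h (hφ_zero i (not_lt.1 hlt))).symm
    _ ≤ ∑ i ∈ F, φ i := sum_le_sum_of_subset_of_nonneg
      (fun i hi => hF' i (mem_filter.1 hi).1 (mem_filter.1 hi).2) fun i _ _ => hφ_nonneg i
  simp only [hφ_def, sum_sub_distrib, sum_const, ← mul_sum, nsmul_eq_mul, mul_one] at hφ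
  have : (#F' : ℝ) < #F := by nlinarith [pow_pos (two_pos : (0:ℝ) < 2) j]
  exact_mod_cast this

theorem card_lt_card_of_lt_level {j u : ℕ} {c : ℝ} (hju : j < u) (hF : ∀ i ∈ F, u ≤ lvl i)
    (hF' : ∀ i ∈ F', j < lvl i → i ∈ F) (hj : ∃ i ∈ F', lvl i ≤ j)
    (hsumF : 2 ^ u * ∑ i ∈ F, ((2:ℝ) ^ max j (lvl i))⁻¹ = c)
    (hsumF' : 2 ^ u * ∑ i ∈ F', ((2:ℝ) ^ max j (lvl i))⁻¹ < c + u - j) : #F' < #F := by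
  set ψ : ι → ℝ := fun i => 2 ^ u * ((2:ℝ) ^ max j (lvl i))⁻¹ - 1 with hψ_def
  have hψ_F : ∀ i ∈ F, ψ i ≤ 0 := fun i hi => by
    simp only [hψ_def]
    rw [sub_nonpos, max_eq_right (hju.le.trans (hF i hi)), mul_inv_le_iff₀ (by positivity),
      one_mul]
    exact pow_le_pow_right₀ one_le_two (hF i hi)
  have hψ_low : ∀ i, lvl i ≤ j → (u : ℝ) - j ≤ ψ i := fun i hi => by
    simp only [hψ_def, max_eq_left hi]
    linarith [sub_add_one_le_two_pow_mul_inv hju.le]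
  have hju' : (j : ℝ) < u := by exact_mod_cast hju
  obtain ⟨i₀, hi₀, hi₀j⟩ := hj
  have hlow : (u : ℝ) - j ≤ ∑ i ∈ F' with lvl i ≤ j, ψ i :=
    (hψ_low i₀ hi₀j).trans (single_le_sum (fun i hi => by linarith [hψ_low i (mem_filter.1 hi).2])
      (mem_filter.2 ⟨hi₀, hi₀j⟩))
  have hhigh : ∑ i ∈ F, ψ i ≤ ∑ i ∈ F' with ¬ lvl i ≤ j, ψ i := by
    have := sum_le_sum_of_subset_of_nonneg (f := fun i => -ψ i)
      (fun i hi => hF' i (mem_filter.1 hi).1 (not_le.1 (mem_filter.1 hi).2))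
      fun i hi _ => neg_nonneg.2 (hψ_F i hi)
    simpa only [sum_neg_distrib, neg_le_neg_iff] using this
  have hsplit := sum_filter_add_sum_filter_not F' (fun i => lvl i ≤ j) ψ
  simp only [hψ_def, sum_sub_distrib, sum_const, ← mul_sum, nsmul_eq_mul, mul_one]
    at hsplit hhigh hlow
  have : (#F' : ℝ) < #F := by linarith
  exact_mod_cast this

end LevelWeights

namespace EquiLowerBound

/-! A job is indexed by its machine in the equilibrium, say of group `u`, and its position
`t < 2 ^ (k + 1 - u)` there; its level is `u + ⌊log₂ t⌋`. The machines of group `k + 1` receive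
no job, neither in the equilibrium nor in the optimum. -/

def machineCount (k u : ℕ) : ℕ :=
  if u = 0 then 1 else if u ≤ k then 2 * 4 ^ (u - 1) else 2 * 4 ^ (k - 1)

def jobCount (k u : ℕ) : ℕ := if u ≤ k then 2 ^ (k + 1 - u) else 0

abbrev Machine (k : ℕ) := Σ u : Fin (k + 2), Fin (machineCount k u)

abbrev Job (k : ℕ) := Σ x : Machine k, Fin (jobCount k x.1)

variable {k : ℕ}

def Job.level (i : Job k) : ℕ := i.1.1 + Nat.log 2 i.2

noncomputable def speed (x : Machine k) : ℝ := ((2:ℝ) ^ (x.1 : ℕ))⁻¹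

noncomputable def length (i : Job k) : ℝ := ((2:ℝ) ^ i.level)⁻¹

theorem speed_pos (x : Machine k) : 0 < speed x := by
  unfold speed
  positivity

theorem length_pos (i : Job k) : 0 < length i := by
  unfold length
  positivity

theorem Job.group_le (i : Job k) : (i.1.1 : ℕ) ≤ k := by
  by_contra h
  have := i.2.pos
  simp [jobCount, h] at this

theorem Job.group_le_level (i : Job k) : (i.1.1 : ℕ) ≤ i.level := Nat.le_add_right _ _

theorem Job.level_le (i : Job k) : i.level ≤ k := by
  have hlt : (i.2 : ℕ) < 2 ^ (k + 1 - i.1.1) := by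
    simpa [jobCount, i.group_le] using i.2.isLt
  rcases Nat.eq_zero_or_pos (i.2 : ℕ) with h | h
  · simp [Job.level, h, i.group_le]
  · have := Nat.log_lt_of_lt_pow h.ne' hlt
    have := i.group_le
    unfold Job.level
    omega

theorem Job.ext {i i' : Job k} (h : i.1 = i'.1) (ht : (i.2 : ℕ) = i'.2) : i = i' := by
  obtain ⟨x, t⟩ := i
  obtain ⟨x', t'⟩ := i'
  subst h
  exact Sigma.ext rfl (heq_of_eq (Fin.ext ht))

theorem sum_fiber_inv_two_pow_max_level {j : ℕ} (hj : j ≤ k) {y : Machine k}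
    (hy : (y.1 : ℕ) ≤ k) :
    ∑ i ∈ univ.filter (fun i : Job k => i.1 = y), ((2:ℝ) ^ max j i.level)⁻¹
      = (k + 2 - max j y.1 : ℕ) * speed y := by
  have hmax : ∀ e, max j (y.1 + e) = y.1 + max (j - y.1) e := fun e => by omega
  simp only [sum_filter_sigma_fst, Job.level, hmax, pow_add, mul_inv, ← mul_sum]
  rw [Fin.sum_univ_eq_sum_range (fun t => ((2:ℝ) ^ max (j - y.1) (Nat.log 2 t))⁻¹),
    jobCount, if_pos hy, sum_range_inv_two_pow_max_log (by omega), speed, mul_comm]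
  rw [← Nat.cast_add_one, ← Nat.cast_sub (by omega)]
  congr 2
  omega

theorem equiCost_eq (σ : Job k → Machine k) (i : Job k) :
    equiCost length speed σ i = 2 ^ ((σ i).1 : ℕ) *
      ∑ i' ∈ univ.filter (fun i' => σ i' = σ i), ((2:ℝ) ^ max i.level i'.level)⁻¹ := by
  simp only [equiCost, speed, inv_inv, length, min_inv_two_pow]

theorem equiCost_fst (i : Job k) : equiCost length speed Sigma.fst i = k + 2 - i.level := by
  rw [equiCost_eq, sum_fiber_inv_two_pow_max_level i.level_le i.group_le,
    max_eq_left i.group_le_level, speed, mul_left_comm, mul_inv_cancel₀ (by positivity), mul_one,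
    Nat.cast_sub (by linarith [i.level_le])]
  push_cast
  ring

theorem equiLoad_fst {y : Machine k} (hy : (y.1 : ℕ) ≤ k) :
    equiLoad length Sigma.fst y = (k + 2 - y.1 : ℕ) * speed y := by
  simpa [equiLoad, length, Nat.zero_max] using
    sum_fiber_inv_two_pow_max_level (j := 0) (Nat.zero_le k) hy

theorem equiLoad_fst_of_lt {y : Machine k} (hy : k < y.1) : equiLoad length Sigma.fst y = 0 :=
  sum_eq_zero fun i hi => absurd i.group_le (by rw [(mem_filter.1 hi).2]; omega)

theorem equiLoad_fst_div_speed_le (y : Machine k) :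
    equiLoad length Sigma.fst y / speed y ≤ k + 2 := by
  rcases le_or_gt (y.1 : ℕ) k with hy | hy
  · rw [equiLoad_fst hy, mul_div_cancel_right₀ _ (speed_pos y).ne']
    exact_mod_cast Nat.sub_le _ _
  · rw [equiLoad_fst_of_lt hy, zero_div]
    positivity

theorem exists_equiLoad_fst_div_speed_eq :
    ∃ y : Machine k, equiLoad length Sigma.fst y / speed y = k + 2 := by
  refine ⟨⟨0, 0, by simp [machineCount]⟩, ?_⟩
  rw [equiLoad_fst (Nat.zero_le k), mul_div_cancel_right₀ _ (speed_pos _).ne']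
  simp

theorem le_equiCost_of_lt_group {σ : Job k → Machine k} {i : Job k} (h : k < ((σ i).1 : ℕ)) :
    (k : ℝ) + 2 - i.level ≤ equiCost length speed σ i := by
  have hu : ((σ i).1 : ℕ) = k + 1 := by have := (σ i).1.isLt; omega
  calc (k : ℝ) + 2 - i.level = ((k + 1 : ℕ) : ℝ) - i.level + 1 := by push_cast; ring
    _ ≤ 2 ^ (k + 1) * ((2:ℝ) ^ i.level)⁻¹ :=
      sub_add_one_le_two_pow_mul_inv (by linarith [i.level_le])
    _ = length i / speed (σ i) := by rw [length, speed, hu, div_inv_eq_mul, mul_comm]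
    _ ≤ equiCost length speed σ i := div_le_equiCost (fun i => (length_pos i).le) (speed_pos _).le

theorem card_fiber_lt {S : Finset (Job k)} {σ : Job k → Machine k} (hfix : ∀ i ∉ S, σ i = i.1)
    {i₀ : Job k} (hmax : ∀ i ∈ S, σ i = σ i₀ → i.level ≤ i₀.level)
    (himp : equiCost length speed σ i₀ < equiCost length speed Sigma.fst i₀) :
    #{i | σ i = σ i₀} < #{i : Job k | i.1 = σ i₀} := by
  rcases lt_or_ge k (σ i₀).1 with hy | hy
  · exact absurd himp (not_lt.2 (equiCost_fst i₀ ▸ le_equiCost_of_lt_group hy))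
  rw [equiCost_eq, equiCost_fst] at himp
  set y := σ i₀
  set j := i₀.level
  have hF' : ∀ i ∈ univ.filter (σ · = y), j < i.level →
      i ∈ univ.filter (fun i : Job k => i.1 = y) := by
    intro i hi hlt
    simp only [mem_filter, mem_univ, true_and] at hi ⊢
    rwa [← hfix i fun hiS => (hmax i hiS hi).not_gt hlt]
  have hi₀F' : i₀ ∈ univ.filter (σ · = y) := mem_filter.2 ⟨mem_univ _, rfl⟩
  have hsum := sum_fiber_inv_two_pow_max_level i₀.level_le hy
  rcases le_or_gt (y.1 : ℕ) j with hyj | hjy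
  · refine card_lt_card_of_sum_lt Job.level j hF' ?_
    rw [hsum, max_eq_left hyj, speed, Nat.cast_sub (by linarith [i₀.level_le]), ← div_eq_mul_inv,
      lt_div_iff₀ (by positivity), mul_comm]
    push_cast
    exact himp
  · refine card_lt_card_of_lt_level Job.level (c := k + 2 - (y.1 : ℕ)) hjy
      (fun i hi => (mem_filter.1 hi).2 ▸ i.group_le_level) hF' ⟨i₀, hi₀F', le_rfl⟩ ?_ ?_
    · rw [hsum, max_eq_right hjy.le, speed, mul_left_comm, mul_inv_cancel₀ (by positivity),
        mul_one, Nat.cast_sub (by omega)]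
      push_cast
      ring
    · linarith

theorem isEquiStrongNE_fst : IsEquiStrongNE length speed (Sigma.fst : Job k → Machine k) := by
  rintro ⟨S, σ, hS, hfix, himp⟩
  obtain ⟨i, hiS, hle⟩ := exists_mem_card_fiber_le hS hfix
  obtain ⟨i₀, hi₀, hmax⟩ :=
    exists_max_image (S.filter (σ · = σ i)) Job.level ⟨i, mem_filter.2 ⟨hiS, rfl⟩⟩
  obtain ⟨hi₀S, hi₀i⟩ := mem_filter.1 hi₀
  have hlt := card_fiber_lt hfix
    (fun i' hi' h => hmax i' (mem_filter.2 ⟨hi', h.trans hi₀i⟩)) (himp i₀ hi₀S)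
  rw [hi₀i] at hlt
  exact hlt.not_ge hle

theorem sum_machineCount_mul_two_pow {n : ℕ} (hn : n < k) :
    ∑ u ∈ range (n + 1), machineCount k u * 2 ^ (n + 1 - u) = machineCount k (n + 1) := by
  induction n with
  | zero => simp [machineCount, Nat.one_le_iff_ne_zero.1 hn]
  | succ n ih =>
    have hstep : ∀ u ∈ range (n + 1),
        machineCount k u * 2 ^ (n + 2 - u) = 2 * (machineCount k u * 2 ^ (n + 1 - u)) :=
      fun u hu => by rw [show n + 2 - u = n + 1 - u + 1 by grind, pow_succ]; ring
    rw [sum_range_succ, sum_congr rfl hstep, ← mul_sum, ih (by omega)]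
    simp only [machineCount, if_neg (Nat.succ_ne_zero _), if_pos (show n + 1 ≤ k by omega),
      if_pos (show n + 2 ≤ k by omega), Nat.add_sub_cancel_left, Nat.add_sub_cancel]
    ring

theorem card_machine :
    Fintype.card (Machine k) = 1 + 2 * (4 ^ k - 1) / 3 + 2 * 4 ^ (k - 1) := by
  have hgroups : ∀ u ∈ range k, machineCount k (u + 1) = 2 * 4 ^ u := fun u hu => by
    simp [machineCount, Nat.succ_le_of_lt (mem_range.1 hu)]
  have hdvd : 3 ∣ 4 ^ k - 1 := by simpa using Nat.sub_dvd_pow_sub_pow 4 1 k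
  rw [Fintype.card_sigma]
  simp only [Fintype.card_fin]
  rw [Fin.sum_univ_eq_sum_range (machineCount k) (k + 2), sum_range_succ, sum_range_succ',
    sum_congr rfl hgroups, ← mul_sum, Nat.geomSum_eq (m := 4) (by norm_num) k]
  simp only [machineCount, if_true, if_neg (Nat.succ_ne_zero k),
    if_neg (Nat.not_succ_le_self k), show 4 - 1 = 3 from rfl]
  omega

theorem card_promoted_on_le (x : Machine k) (j : ℕ) :
    #{t : Fin (jobCount k x.1) | 2 ≤ (t : ℕ) ∧ Job.level (⟨x, t⟩ : Job k) = j}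
      ≤ if (x.1 : ℕ) < j then 2 ^ (j - x.1) else 0 := by
  split_ifs with hj
  · calc _ ≤ #(Ico (2 ^ (j - x.1)) (2 ^ (j - x.1 + 1))) := by
          refine card_le_card_of_injOn Fin.val (fun t ht => ?_) Fin.val_injective.injOn
          obtain ⟨h2, hlvl⟩ := (mem_filter.1 ht).2
          have hlog : Nat.log 2 t = j - x.1 := by dsimp only [Job.level] at hlvl; omega
          rw [mem_coe, mem_Ico, ← hlog]
          exact ⟨Nat.pow_log_le_self 2 (by omega), Nat.lt_pow_succ_log_self one_lt_two _⟩
      _ = 2 ^ (j - x.1) := by rw [Nat.card_Ico, pow_succ]; omega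
  · refine (card_eq_zero.2 (filter_eq_empty_iff.2 fun t _ ⟨h2, hlvl⟩ => ?_)).le
    have := Nat.log_pos one_lt_two h2
    dsimp only [Job.level] at hlvl
    omega

theorem card_promoted_le (j : ℕ) :
    Fintype.card {i : Job k // 2 ≤ (i.2 : ℕ) ∧ i.level = j} ≤ machineCount k j := by
  rw [Fintype.card_subtype]
  rcases lt_or_ge k j with hjk | hjk
  · exact (card_eq_zero.2 (filter_eq_empty_iff.2 fun i _ h => by
      linarith [i.level_le, h.2])).le.trans (Nat.zero_le _)
  calc #{i : Job k | 2 ≤ (i.2 : ℕ) ∧ i.level = j}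
      = ∑ x : Machine k,
          #{t : Fin (jobCount k x.1) | 2 ≤ (t : ℕ) ∧ Job.level (⟨x, t⟩ : Job k) = j} := by
        simp only [card_filter]
        exact Fintype.sum_sigma _
    _ ≤ ∑ x : Machine k, if (x.1 : ℕ) < j then 2 ^ (j - x.1) else 0 :=
        sum_le_sum fun x _ => card_promoted_on_le x j
    _ = ∑ u ∈ range (k + 2), machineCount k u * if u < j then 2 ^ (j - u) else 0 := by
        rw [Fintype.sum_sigma, ← Fin.sum_univ_eq_sum_range]
        simp
    _ = ∑ u ∈ range j, machineCount k u * 2 ^ (j - u) := by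
        rw [← sum_range_add_sum_Ico _ (by omega : j ≤ k + 2),
          sum_eq_zero (s := Ico j (k + 2)) fun u hu => by simp [(mem_Ico.1 hu).1.not_gt], add_zero]
        exact sum_congr rfl fun u hu => by rw [if_pos (mem_range.1 hu)]
    _ ≤ machineCount k j := by
        rcases j with _ | n
        · simp
        · exact (sum_machineCount_mul_two_pow (by omega)).le

noncomputable def promote (j : ℕ) :
    {i : Job k // 2 ≤ (i.2 : ℕ) ∧ i.level = j} ↪ Fin (machineCount k j) :=
  Classical.choice (Function.Embedding.nonempty_of_card_le
    ((card_promoted_le j).trans_eq (Fintype.card_fin _).symm))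

noncomputable def optAssign (i : Job k) : Machine k :=
  if h : 2 ≤ (i.2 : ℕ) then ⟨⟨i.level, by linarith [i.level_le]⟩, promote i.level ⟨i, h, rfl⟩⟩
  else i.1

theorem optAssign_of_lt {i : Job k} (h : (i.2 : ℕ) < 2) : optAssign i = i.1 :=
  dif_neg (not_le.2 h)

theorem group_optAssign (i : Job k) : ((optAssign i).1 : ℕ) = i.level := by
  by_cases h : 2 ≤ (i.2 : ℕ)
  · rw [optAssign, dif_pos h]
  · rw [optAssign_of_lt (not_le.1 h), Job.level, Nat.log_of_lt (not_le.1 h), add_zero]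

theorem length_eq_speed_optAssign (i : Job k) : length i = speed (optAssign i) := by
  rw [speed, group_optAssign, length]

theorem optAssign_inj_of_two_le {i i' : Job k} (h : 2 ≤ (i.2 : ℕ)) (h' : 2 ≤ (i'.2 : ℕ))
    (heq : optAssign i = optAssign i') : i = i' := by
  rw [optAssign, optAssign, dif_pos h, dif_pos h'] at heq
  have key : ∀ (j j' : ℕ) (hj : j < k + 2) (hj' : j' < k + 2)
      (a : {i : Job k // 2 ≤ (i.2 : ℕ) ∧ i.level = j})
      (b : {i : Job k // 2 ≤ (i.2 : ℕ) ∧ i.level = j'}),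
      (⟨⟨j, hj⟩, promote j a⟩ : Machine k) = ⟨⟨j', hj'⟩, promote j' b⟩ → a.1 = b.1 := by
    rintro j j' hj hj' a b hab
    obtain rfl : j = j' := by simpa using congrArg (fun x : Machine k => (x.1 : ℕ)) hab
    exact congrArg Subtype.val ((promote j).injective (eq_of_heq (Sigma.mk.inj_iff.1 hab).2))
  exact key _ _ _ _ _ _ heq

theorem card_fiber_optAssign_le (y : Machine k) : #{i | optAssign i = y} ≤ 3 := by
  -- jobs staying on `y` differ in their position; at most one job is promoted to `y`
  let g : Job k → Option (Fin 2) := fun i => if h : (i.2 : ℕ) < 2 then some ⟨i.2, h⟩ else none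
  refine (card_le_card_of_injOn g (fun _ _ => mem_coe.2 (mem_univ _)) ?_).trans_eq rfl
  intro i hi i' hi' hg
  simp only [coe_filter, mem_univ, true_and, Set.mem_ofPred_eq] at hi hi'
  by_cases h : (i.2 : ℕ) < 2 <;> by_cases h' : (i'.2 : ℕ) < 2 <;>
    simp only [g, h, h', ↓reduceDIte, Option.some.injEq, Fin.mk.injEq, reduceCtorEq] at hg
  · rw [optAssign_of_lt h] at hi
    rw [optAssign_of_lt h'] at hi'
    exact Job.ext (hi.trans hi'.symm) hg
  · exact optAssign_inj_of_two_le (not_lt.1 h) (not_lt.1 h') (hi.trans hi'.symm)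

theorem equiLoad_optAssign_div_speed_le (y : Machine k) :
    equiLoad length optAssign y / speed y ≤ 3 := by
  rw [equiLoad_eq_card_mul length_eq_speed_optAssign, mul_div_cancel_right₀ _ (speed_pos y).ne']
  exact_mod_cast card_fiber_optAssign_le y

end EquiLowerBound

open EquiLowerBound in
/-- The price of anarchy of EQUI on uniform machines is `Ω(log m)`:
for every `k ≥ 1` there is an instance with `m = 1 + (2/3)(4^k − 1) + 2·4^{k−1}`
machines whose optimal makespan is at most `3` and which admits a (strong) Nash
equilibrium of makespan `k + 2`. -/
theorem equi_uniform_poa_lower :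
    ∀ k : ℕ, 1 ≤ k →
    ∃ (mm nn : ℕ) (s : Fin mm → ℝ) (p : Fin nn → ℝ) (σ : Fin nn → Fin mm),
      mm = 1 + 2 * (4 ^ k - 1) / 3 + 2 * 4 ^ (k - 1) ∧
      (∀ x, 0 < s x) ∧ (∀ i, 0 < p i) ∧
      uEquiNE p s σ ∧ uEquiStrongNE p s σ ∧
      (∀ x, uLoad p σ x / s x ≤ (k : ℝ) + 2) ∧
      (∃ x, uLoad p σ x / s x = (k : ℝ) + 2) ∧
      (∃ τ : Fin nn → Fin mm, ∀ x, uLoad p τ x / s x ≤ 3) := by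
  intro k _
  let e := (Fintype.equivFin (Machine k)).symm
  let f := (Fintype.equivFin (Job k)).symm
  have hmakespan : ∀ (σ : Job k → Machine k) x, uLoad (length ∘ f) (e.symm ∘ σ ∘ f) x
      / (speed ∘ e) x = equiLoad length σ (e x) / speed (e x) :=
    fun σ x => congrArg (· / speed (e x)) (equiLoad_comp_equiv f e length σ x)
  have hstrong : uEquiStrongNE (length ∘ f) (speed ∘ e) (e.symm ∘ Sigma.fst ∘ f) :=
    isEquiStrongNE_fst.comp_equiv f e
  obtain ⟨y, hy⟩ := exists_equiLoad_fst_div_speed_eq (k := k)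
  refine ⟨_, _, speed ∘ e, length ∘ f, e.symm ∘ Sigma.fst ∘ f, card_machine,
    fun x => speed_pos _, fun i => length_pos _, uEquiNE_of_uEquiStrongNE hstrong, hstrong,
    fun x => ?_, ⟨e.symm y, ?_⟩, ⟨e.symm ∘ optAssign ∘ f, fun x => ?_⟩⟩
  · rw [hmakespan]
    exact equiLoad_fst_div_speed_le _
  · rw [hmakespan, e.apply_symm_apply, hy]
  · rw [hmakespan]
    exact equiLoad_optAssign_div_speed_le _
end
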